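/- In the generalized linear model (z ∼ N(0,I_k), x = Wz, P(y=+1|z) = f(zᵀβ) with f increasing), the boundary risk of the Bayes-optimal classifier under ℓ₂ perturbations of radius ε satisfies BR(h*) ≤ 2ε‖W(WᵀW)^{-1}β‖₂ / (√(2π)‖β‖₂) ≤ 2ε/(√(2π)σ_min(W)). -/

import Mathlib

/-!
With `a = W(WᵀW)⁻¹β` we have `aᵀ(Wz) = βᵀz`, so the Bayes classifier is the half-space rule
`h*(x) = sign(aᵀx - c₀)`. A point counts in the adversarial risk but not in the standard one only
if some `x'` within `ε` of `x` lies on the other side of the hyperplane, which by Cauchy–Schwarz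
forces `|aᵀx - c₀| ≤ ε‖a‖`. Whatever the label, this margin event has the probability of
`|βᵀz - c₀| ≤ ε‖a‖` for `z ∼ N(0, I)`, and `βᵀz ∼ N(0, ‖β‖²)` has density at most
`1/(√(2π)‖β‖)`. For the second bound, `‖a‖² = βᵀ(WᵀW)⁻¹β ≤ ‖β‖‖(WᵀW)⁻¹β‖ ≤ ‖β‖‖a‖/σ_min`.
-/

open MeasureTheory ProbabilityTheory Matrix

/-- Euclidean norm on ℝ^n. -/
noncomputable def l2Norm {n : ℕ} (u : Fin n → ℝ) : ℝ := Real.sqrt (∑ i, u i ^ 2)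

open scoped NNReal ENNReal

section L2Norm

variable {n : ℕ}

lemma l2Norm_eq_norm_toLp (u : Fin n → ℝ) :
    l2Norm u = ‖(WithLp.toLp 2 u : EuclideanSpace ℝ (Fin n))‖ := by
  simp [l2Norm, EuclideanSpace.norm_eq]

lemma l2Norm_nonneg (u : Fin n → ℝ) : 0 ≤ l2Norm u := Real.sqrt_nonneg _

lemma l2Norm_pos {u : Fin n → ℝ} (hu : u ≠ 0) : 0 < l2Norm u := by
  rw [l2Norm_eq_norm_toLp, norm_pos_iff]
  simpa using hu

lemma l2Norm_sub_comm (u w : Fin n → ℝ) : l2Norm (u - w) = l2Norm (w - u) := by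
  simp only [l2Norm_eq_norm_toLp, WithLp.toLp_sub, norm_sub_rev]

lemma abs_dotProduct_le_l2Norm_mul (u w : Fin n → ℝ) : |u ⬝ᵥ w| ≤ l2Norm u * l2Norm w := by
  simpa [l2Norm_eq_norm_toLp, EuclideanSpace.inner_toLp_toLp, dotProduct_comm] using
    abs_real_inner_le_norm (WithLp.toLp 2 u : EuclideanSpace ℝ (Fin n)) (WithLp.toLp 2 w)

lemma l2Norm_sq_eq_dotProduct (u : Fin n → ℝ) : l2Norm u ^ 2 = u ⬝ᵥ u := by
  rw [l2Norm, Real.sq_sqrt (by positivity)]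
  simp [dotProduct, sq]

end L2Norm

section Gaussian

open Real

lemma gaussianPDFReal_le_inv_sqrt (μ : ℝ) (v : ℝ≥0) (x : ℝ) :
    gaussianPDFReal μ v x ≤ (√(2 * π * v))⁻¹ := by
  rw [gaussianPDFReal]
  refine mul_le_of_le_one_right (by positivity) (exp_le_one_iff.2 ?_)
  exact div_nonpos_of_nonpos_of_nonneg (neg_nonpos.2 (sq_nonneg _)) (by positivity)

lemma gaussianReal_Icc_le (μ : ℝ) {v : ℝ≥0} (hv : v ≠ 0) (a b : ℝ) :
    gaussianReal μ v (Set.Icc a b) ≤ ENNReal.ofReal ((b - a) / √(2 * π * v)) := by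
  rw [gaussianReal_apply _ hv]
  calc ∫⁻ x in Set.Icc a b, gaussianPDF μ v x
      ≤ ∫⁻ _ in Set.Icc a b, ENNReal.ofReal (√(2 * π * v))⁻¹ :=
        setLIntegral_mono measurable_const fun x _ =>
          ENNReal.ofReal_le_ofReal (gaussianPDFReal_le_inv_sqrt μ v x)
    _ = ENNReal.ofReal ((b - a) / √(2 * π * v)) := by
        rw [setLIntegral_const, Real.volume_Icc, ← ENNReal.ofReal_mul (by positivity),
          div_eq_inv_mul]

lemma map_dotProduct_pi_gaussianReal {n : ℕ} (β : Fin n → ℝ) :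
    (Measure.pi fun _ : Fin n => gaussianReal 0 1).map (β ⬝ᵥ ·) =
      gaussianReal 0 (l2Norm β ^ 2).toNNReal := by
  set L : StrongDual ℝ (EuclideanSpace ℝ (Fin n)) := innerSL ℝ (WithLp.toLp 2 β)
  have hL : (β ⬝ᵥ ·) = L ∘ WithLp.toLp 2 := by
    ext z
    simp [L, EuclideanSpace.inner_toLp_toLp, dotProduct_comm]
  rw [hL, ← Measure.map_map L.continuous.measurable (by fun_prop), map_pi_eq_stdGaussian,
    IsGaussian.map_eq_gaussianReal, integral_strongDual_stdGaussian, variance_dual_stdGaussian,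
    innerSL_apply_norm, l2Norm_eq_norm_toLp]

lemma pi_gaussianReal_abs_dotProduct_sub_le {n : ℕ} {β : Fin n → ℝ} (hβ : β ≠ 0) (c δ : ℝ) :
    Measure.pi (fun _ : Fin n => gaussianReal 0 1) {z | |β ⬝ᵥ z - c| ≤ δ} ≤
      ENNReal.ofReal (2 * δ / (√(2 * π) * l2Norm β)) := by
  have hβpos := l2Norm_pos hβ
  have hpre : {z | |β ⬝ᵥ z - c| ≤ δ} = (β ⬝ᵥ ·) ⁻¹' Set.Icc (c - δ) (c + δ) := by
    ext z
    simp only [Set.mem_ofPred_eq, Set.mem_preimage, Set.mem_Icc, abs_sub_le_iff]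
    constructor <;> intro h <;> constructor <;> linarith [h.1, h.2]
  rw [hpre, ← Measure.map_apply (by fun_prop) measurableSet_Icc, map_dotProduct_pi_gaussianReal]
  refine (gaussianReal_Icc_le 0 (by simpa using hβpos.ne') _ _).trans_eq ?_
  rw [Real.coe_toNNReal _ (by positivity), Real.sqrt_mul (by positivity), Real.sqrt_sq hβpos.le]
  ring_nf

end Gaussian

section LeastSquares

variable {d k : ℕ} (W : Matrix (Fin d) (Fin k) ℝ) [Invertible (Wᵀ * W)]

lemma transpose_mulVec_mul_invOf_mulVec (β : Fin k → ℝ) :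
    Wᵀ *ᵥ ((W * ⅟(Wᵀ * W)) *ᵥ β) = β := by
  rw [mulVec_mulVec, ← Matrix.mul_assoc, mul_invOf_self, one_mulVec]

lemma dotProduct_invOf_mul_transpose_mulVec (β : Fin k → ℝ) (x : Fin d → ℝ) :
    β ⬝ᵥ (⅟(Wᵀ * W) * Wᵀ) *ᵥ x = (W * ⅟(Wᵀ * W)) *ᵥ β ⬝ᵥ x := by
  have hsymm : (⅟(Wᵀ * W))ᵀ = ⅟(Wᵀ * W) := by
    rw [invOf_eq_nonsing_inv, transpose_nonsing_inv, transpose_mul, transpose_transpose]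
  rw [dotProduct_mulVec, ← mulVec_transpose, transpose_mul, transpose_transpose, hsymm]

lemma mul_invOf_mulVec_dotProduct_mulVec (β z : Fin k → ℝ) :
    (W * ⅟(Wᵀ * W)) *ᵥ β ⬝ᵥ W *ᵥ z = β ⬝ᵥ z := by
  rw [dotProduct_mulVec, ← mulVec_transpose, transpose_mulVec_mul_invOf_mulVec]

lemma mul_l2Norm_mul_invOf_mulVec_le {σ : ℝ} (hσ : 0 < σ)
    (hσW : ∀ u : Fin k → ℝ, σ * l2Norm u ≤ l2Norm (W *ᵥ u)) (β : Fin k → ℝ) :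
    σ * l2Norm ((W * ⅟(Wᵀ * W)) *ᵥ β) ≤ l2Norm β := by
  set u := ⅟(Wᵀ * W) *ᵥ β
  have ha : (W * ⅟(Wᵀ * W)) *ᵥ β = W *ᵥ u := (mulVec_mulVec _ _ _).symm
  set a := W *ᵥ u
  have hsq : l2Norm a ^ 2 = β ⬝ᵥ u := by
    rw [l2Norm_sq_eq_dotProduct, ← mul_invOf_mulVec_dotProduct_mulVec W β u, ha]
  have hcs : β ⬝ᵥ u ≤ l2Norm β * l2Norm u :=
    (le_abs_self _).trans (abs_dotProduct_le_l2Norm_mul _ _)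
  have hsq_le : σ * l2Norm a * l2Norm a ≤ l2Norm β * l2Norm a := by
    nlinarith [hσW u, l2Norm_nonneg β]
  rw [ha]
  rcases (l2Norm_nonneg a).eq_or_lt with h0 | hpos
  · rw [← h0, mul_zero]
    exact l2Norm_nonneg β
  · exact le_of_mul_le_mul_right hsq_le hpos

end LeastSquares

lemma abs_sub_le_of_separated {s s' c δ : ℝ} (hsep : c ≤ s ↔ ¬ c ≤ s') (hclose : |s - s'| ≤ δ) :
    |s - c| ≤ δ := by
  rw [abs_le] at hclose ⊢
  by_cases hs : c ≤ s
  · have := hsep.1 hs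
    constructor <;> linarith
  · have := not_not.1 (mt hsep.2 hs)
    constructor <;> linarith

lemma perturbed_sdiff_subset_margin {n : ℕ} (a : Fin n → ℝ) (c ε : ℝ) (h : (Fin n → ℝ) → ℝ)
    (hh : ∀ x, h x = if c ≤ a ⬝ᵥ x then 1 else -1) :
    {p : (Fin n → ℝ) × ℝ | ∃ x', l2Norm (x' - p.1) ≤ ε ∧ h x' * p.2 ≤ 0} \
        {p | h p.1 * p.2 ≤ 0} ⊆ {p | |a ⬝ᵥ p.1 - c| ≤ ε * l2Norm a} := by
  rintro ⟨x, y⟩ ⟨⟨x', hdist, hx'⟩, hx⟩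
  have hsep : c ≤ a ⬝ᵥ x ↔ ¬ c ≤ a ⬝ᵥ x' := by
    by_contra hsame
    have hhx : h x' = h x := by
      simp only [hh]
      split_ifs <;> tauto
    exact hx (show h x * y ≤ 0 from hhx ▸ hx')
  refine abs_sub_le_of_separated hsep ?_
  calc |a ⬝ᵥ x - a ⬝ᵥ x'| = |a ⬝ᵥ (x - x')| := by rw [dotProduct_sub]
    _ ≤ l2Norm a * l2Norm (x - x') := abs_dotProduct_le_l2Norm_mul _ _
    _ ≤ ε * l2Norm a := by
        rw [mul_comm, l2Norm_sub_comm]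
        exact mul_le_mul_of_nonneg_right hdist (l2Norm_nonneg a)

lemma map_withDensity_add_map_withDensity_one_sub_apply {Ω X : Type*} [MeasurableSpace Ω]
    [MeasurableSpace X] (γ : Measure Ω) {g : Ω → ℝ} (hg : Measurable g)
    (hg01 : ∀ ω, g ω ∈ Set.Icc 0 1) {φ ψ : Ω → X} (hφ : Measurable φ) (hψ : Measurable ψ)
    {C : Set X} (hC : MeasurableSet C) (hCψ : ψ ⁻¹' C = φ ⁻¹' C) :
    ((γ.withDensity fun ω => ENNReal.ofReal (g ω)).map φ +
        (γ.withDensity fun ω => ENNReal.ofReal (1 - g ω)).map ψ) C = γ (φ ⁻¹' C) := by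
  have hsum : ∀ ω, ENNReal.ofReal (g ω) + ENNReal.ofReal (1 - g ω) = 1 := fun ω => by
    rw [← ENNReal.ofReal_add (hg01 ω).1 (sub_nonneg.2 (hg01 ω).2), add_sub_cancel,
      ENNReal.ofReal_one]
  rw [Measure.add_apply, Measure.map_apply hφ hC, Measure.map_apply hψ hC, hCψ,
    withDensity_apply _ (hφ hC), withDensity_apply _ (hφ hC),
    ← lintegral_add_left hg.ennreal_ofReal]
  simp only [hsum, setLIntegral_one]

theorem glm_boundary_risk_bound_general {d k : ℕ} (W : Matrix (Fin d) (Fin k) ℝ)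
    [Invertible (Wᵀ * W)]
    (β : Fin k → ℝ) (hβ : β ≠ 0)
    (f : ℝ → ℝ) (hfmono : StrictMono f)
    (hf01 : ∀ t, f t ∈ Set.Icc (0:ℝ) 1) (c₀ : ℝ) (hc₀ : f c₀ = 1/2)
    (σmin : ℝ) (hσ : 0 < σmin)
    (hσW : ∀ u : Fin k → ℝ, σmin * l2Norm u ≤ l2Norm (W.mulVec u))
    (ε : ℝ) (hε : 0 ≤ ε)
    (P : Measure ((Fin d → ℝ) × ℝ))
    (hP : P = (((Measure.pi fun _ : Fin k => gaussianReal 0 1).withDensity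
          (fun z => ENNReal.ofReal (f (z ⬝ᵥ β)))).map
            (fun z => (W.mulVec z, (1:ℝ)))) +
      (((Measure.pi fun _ : Fin k => gaussianReal 0 1).withDensity
          (fun z => ENNReal.ofReal (1 - f (z ⬝ᵥ β)))).map
            (fun z => (W.mulVec z, (-1:ℝ)))))
    (hstar : (Fin d → ℝ) → ℝ)
    (hhstar : hstar = fun x =>
      if 0 ≤ f (β ⬝ᵥ (⅟(Wᵀ * W) * Wᵀ).mulVec x) - 1/2 then 1 else -1) :
    P {p | ∃ x', l2Norm (x' - p.1) ≤ ε ∧ hstar x' * p.2 ≤ 0} -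
        P {p | hstar p.1 * p.2 ≤ 0} ≤
      ENNReal.ofReal (2 * ε * l2Norm ((W * ⅟(Wᵀ * W)).mulVec β) /
        (Real.sqrt (2 * Real.pi) * l2Norm β)) ∧
    2 * ε * l2Norm ((W * ⅟(Wᵀ * W)).mulVec β) /
        (Real.sqrt (2 * Real.pi) * l2Norm β) ≤
      2 * ε / (Real.sqrt (2 * Real.pi) * σmin) := by
  set a := (W * ⅟(Wᵀ * W)) *ᵥ β
  have hβpos := l2Norm_pos hβ
  refine ⟨?_, ?_⟩
  · have hh : ∀ x, hstar x = if c₀ ≤ a ⬝ᵥ x then 1 else -1 := fun x => by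
      simp only [hhstar, dotProduct_invOf_mul_transpose_mulVec, sub_nonneg, ← hc₀,
        hfmono.le_iff_le, a]
    have hpre : ∀ y : ℝ, (fun z => (W *ᵥ z, y)) ⁻¹' {p | |a ⬝ᵥ p.1 - c₀| ≤ ε * l2Norm a} =
        {z | |β ⬝ᵥ z - c₀| ≤ ε * l2Norm a} := fun y => by
      ext z
      simp only [a, Set.mem_preimage, Set.mem_ofPred_eq, mul_invOf_mulVec_dotProduct_mulVec]
    calc _ ≤ P (_ \ _) := le_measure_sdiff
      _ ≤ P {p | |a ⬝ᵥ p.1 - c₀| ≤ ε * l2Norm a} :=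
          measure_mono (perturbed_sdiff_subset_margin a c₀ ε hstar hh)
      _ = Measure.pi (fun _ : Fin k => gaussianReal 0 1) {z | |β ⬝ᵥ z - c₀| ≤ ε * l2Norm a} := by
          rw [hP, map_withDensity_add_map_withDensity_one_sub_apply _ (g := fun z => f (z ⬝ᵥ β))
            (hfmono.monotone.measurable.comp (by fun_prop)) (fun z => hf01 _) (by fun_prop)
            (by fun_prop) (measurableSet_le (by fun_prop) (by fun_prop)) (by rw [hpre, hpre]),
            hpre]
      _ ≤ _ := pi_gaussianReal_abs_dotProduct_sub_le hβ _ _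
      _ = _ := by rw [mul_assoc 2 ε]
  · rw [div_le_div_iff₀ (mul_pos (by positivity) hβpos) (by positivity)]
    calc 2 * ε * l2Norm a * (√(2 * Real.pi) * σmin)
        = 2 * ε * √(2 * Real.pi) * (σmin * l2Norm a) := by ring
      _ ≤ 2 * ε * √(2 * Real.pi) * l2Norm β := by
          gcongr
          exact mul_l2Norm_mul_invOf_mulVec_le W hσ hσW β
      _ = 2 * ε * (√(2 * Real.pi) * l2Norm β) := by ring

/-- Generalized linear model with latent structure: `z ∼ N(0, I_k)`, `x = Wz`,
`P(y = 1 | z) = f(zᵀβ)`. The boundary risk (for ℓ₂ perturbations of radius `ε`)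
of the Bayes-optimal classifier satisfies
`BR(h*) ≤ 2ε‖W(WᵀW)⁻¹β‖/(√(2π)‖β‖) ≤ 2ε/(√(2π)σ_min(W))`. -/
theorem glm_boundary_risk_bound {d k : ℕ} (W : Matrix (Fin d) (Fin k) ℝ)
    [Invertible (Wᵀ * W)]
    (β : Fin k → ℝ) (hβ : β ≠ 0)
    (f : ℝ → ℝ) (hfmono : StrictMono f) (hfmeas : Measurable f)
    (hf01 : ∀ t, f t ∈ Set.Icc (0:ℝ) 1) (c₀ : ℝ) (hc₀ : f c₀ = 1/2)
    (σmin : ℝ) (hσ : 0 < σmin)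
    (hσW : ∀ u : Fin k → ℝ, σmin * l2Norm u ≤ l2Norm (W.mulVec u))
    (ε : ℝ) (hε : 0 ≤ ε)
    (P : Measure ((Fin d → ℝ) × ℝ))
    (hP : P = (((Measure.pi fun _ : Fin k => gaussianReal 0 1).withDensity
          (fun z => ENNReal.ofReal (f (z ⬝ᵥ β)))).map
            (fun z => (W.mulVec z, (1:ℝ)))) +
      (((Measure.pi fun _ : Fin k => gaussianReal 0 1).withDensity
          (fun z => ENNReal.ofReal (1 - f (z ⬝ᵥ β)))).map
            (fun z => (W.mulVec z, (-1:ℝ)))))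
    (hstar : (Fin d → ℝ) → ℝ)
    (hhstar : hstar = fun x =>
      if 0 ≤ f (β ⬝ᵥ (⅟(Wᵀ * W) * Wᵀ).mulVec x) - 1/2 then 1 else -1) :
    P {p | ∃ x', l2Norm (x' - p.1) ≤ ε ∧ hstar x' * p.2 ≤ 0} -
        P {p | hstar p.1 * p.2 ≤ 0} ≤
      ENNReal.ofReal (2 * ε * l2Norm ((W * ⅟(Wᵀ * W)).mulVec β) /
        (Real.sqrt (2 * Real.pi) * l2Norm β)) ∧
    2 * ε * l2Norm ((W * ⅟(Wᵀ * W)).mulVec β) /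
        (Real.sqrt (2 * Real.pi) * l2Norm β) ≤
      2 * ε / (Real.sqrt (2 * Real.pi) * σmin) :=
  glm_boundary_risk_bound_general W β hβ f hfmono hf01 c₀ hc₀ σmin hσ hσW ε hε P hP hstar hhstar
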